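/- For every integer p ≥ 3, the random K_p-free graph has no automatic presentation. More precisely, there do not exist a finite alphabet Σ, a regular language A ⊆ Σ*, and a symmetric irreflexive binary relation E on A whose convolution is a regular language, such that the graph (A,E) is K_p-free and satisfies: for every finite set Y ⊆ A of vertices and every subset K ⊆ Y whose induced subgraph is K_{p-1}-free, there exists a vertex x ∈ A adjacent to every vertex of K and to no vertex of Y ∖ K. -/

import Mathlib

/-!
Let `N` be a DFA reading convolutions `conv ![x, y]` and recognising the edge relation. Whether
`x` is adjacent to a word of length at most `n` depends only on the *profile* of `x`: its first
`n` letters together with the set of states of `N` from which the rest of `x`, read against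
blanks, is accepted. For an independent set `I` of words of length at most `n`, the extension
property realises every subset of `I` as the trace of a neighbourhood on `I`, hence
`2 ^ #I ≤ #(prefixes of length n of A) * 2 ^ #(states of N)`. Since the graph is `K_p`-free,
the Erdős–Szekeres bound produces an independent set of size `b + 1` inside any
`(p - 1 + b).choose (p - 1)` vertices.

Let `M` be a DFA for `A`. If two loops at a useful state of `M` do not commute, `A` contains
`2 ^ k` words of length `O(k)`, hence an independent set of size linear in `k` with an arbitrarily
large constant, which contradicts the bound above. If all such loops commute, every prefix of a
word of `A` is a product of at most `#(states of M)` pumped blocks, so `A` has only polynomially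
many prefixes of length `n`; a pumped family `a b^i c` of words of `A` then yields an independent
set whose size beats the logarithm of that polynomial.
-/

/-- The convolution of an `n`-tuple of words. -/
def conv {α : Type*} {n : ℕ} (w : Fin n → List α) : List (Fin n → Option α) :=
  (List.range (Finset.univ.sup fun i => (w i).length)).map fun k i => (w i)[k]?

open Finset Filter

section Convolution
variable {α : Type*}

theorem length_conv {n : ℕ} (w : Fin n → List α) :
    (conv w).length = univ.sup fun i => (w i).length := by
  simp [conv]

theorem getElem?_conv {n : ℕ} (w : Fin n → List α) (i : Fin n) (k : ℕ) :
    (w i)[k]? = (conv w)[k]?.bind (· i) := by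
  simp only [conv, List.getElem?_map]
  by_cases hk : k < univ.sup fun i => (w i).length
  · simp [List.getElem?_range hk]
  · rw [not_lt] at hk
    rw [List.getElem?_eq_none ((le_sup (f := fun i => (w i).length) (mem_univ i)).trans hk),
      List.getElem?_eq_none (by simpa using hk)]
    rfl

theorem conv_injective {n : ℕ} : Function.Injective (conv : (Fin n → List α) → _) :=
  fun w w' h => funext fun i =>
    List.ext_getElem? fun k => by rw [getElem?_conv, getElem?_conv, h]

theorem conv_pair_append_of_length_le {x₁ x₂ y : List α} (h : y.length ≤ x₁.length) :
    conv ![x₁ ++ x₂, y] = conv ![x₁, y] ++ x₂.map fun a => ![some a, none] := by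
  have hsup : ∀ x y : List α,
      (univ.sup fun i => (![x, y] i).length) = max x.length y.length := by
    simp [Fin.univ_succ]
  refine List.ext_getElem (by simp [length_conv, hsup]; omega) fun k _ _ => ?_
  simp only [conv, hsup, List.getElem_map, List.getElem_range, List.getElem_append,
    List.length_map, List.length_range, max_eq_left h]
  funext i
  fin_cases i
  · split_ifs with hk
    · simp [List.getElem?_append_left hk]
    · simp [List.getElem?_append_right (not_lt.mp hk)]
  · split_ifs with hk
    · simp
    · simp
      omega

theorem conv_pair_eq_take_append (x : List α) {v : List α} {n : ℕ} (hv : v.length ≤ n) :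
    conv ![x, v] = conv ![x.take n, v] ++ (x.drop n).map fun a => ![some a, none] := by
  rcases le_or_gt n x.length with hn | hn
  · conv_lhs => rw [← List.take_append_drop n x]
    exact conv_pair_append_of_length_le (by simpa [hn] using hv)
  · simp [List.take_of_length_le hn.le, List.drop_of_length_le hn.le]

end Convolution

theorem Nat.eventually_mul_pow_lt_two_pow (C k : ℕ) : ∀ᶠ n : ℕ in atTop, C * n ^ k < 2 ^ n := by
  have h := (tendsto_pow_const_div_const_pow_of_one_lt k one_lt_two).eventually
    (gt_mem_nhds (show (0 : ℝ) < 1 / (C + 1) by positivity))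
  filter_upwards [h] with n hn
  rw [lt_div_iff₀ (by positivity), div_mul_eq_mul_div, div_lt_iff₀ (by positivity)] at hn
  have : (C : ℝ) * n ^ k < 2 ^ n := by
    nlinarith [pow_nonneg (Nat.cast_nonneg n : (0 : ℝ) ≤ n) k]
  exact_mod_cast this

namespace Finset

variable {β : Type*} [DecidableEq β]

theorem pairwise_insert_of_subset_filter {r : β → β → Prop} (hr : ∀ x y, r x y → r y x)
    {v : β} {C S : Finset β} [DecidablePred (r v)] (hC : (C : Set β).Pairwise r)
    (hCS : C ⊆ S.filter (r v)) : ((insert v C : Finset β) : Set β).Pairwise r := by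
  rw [coe_insert, Set.pairwise_insert]
  exact ⟨hC, fun u hu _ => have h := (mem_filter.mp (hCS hu)).2; ⟨h, hr _ _ h⟩⟩

theorem exists_pairwise_or_pairwise_not_of_choose_le {R : β → β → Prop}
    (hR : ∀ x y, R x y → R y x) :
    ∀ (a b : ℕ) (V : Finset β), (a + b).choose a ≤ #V →
      (∃ C ⊆ V, #C = a + 1 ∧ (C : Set β).Pairwise R) ∨
      ∃ I ⊆ V, #I = b + 1 ∧ (I : Set β).Pairwise fun x y => ¬R x y
  | 0, _, V, hV => by
    obtain ⟨v, hv⟩ : V.Nonempty := card_pos.mp (by simpa using hV)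
    exact Or.inl ⟨{v}, by simpa using hv, by simp, by simp⟩
  | a + 1, 0, V, hV => by
    obtain ⟨v, hv⟩ : V.Nonempty := card_pos.mp (by simpa using hV)
    exact Or.inr ⟨{v}, by simpa using hv, by simp, by simp⟩
  | a + 1, b + 1, V, hV => by
    classical
    obtain ⟨v, hv⟩ : V.Nonempty := card_pos.mp ((Nat.choose_pos (by omega)).trans_le hV)
    have hpascal : (a + 1 + (b + 1)).choose (a + 1) =
        (a + (b + 1)).choose a + (a + 1 + b).choose (a + 1) := by
      rw [show a + 1 + (b + 1) = a + (b + 1) + 1 by omega, Nat.choose_succ_succ,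
        show a + (b + 1) = a + 1 + b by omega]
    have hsplit := card_filter_add_card_filter_not (s := V.erase v) (R v)
    rw [card_erase_of_mem hv] at hsplit
    have hsub : ∀ {P : β → Prop} [DecidablePred P], (V.erase v).filter P ⊆ V := fun h =>
      erase_subset v V (mem_of_mem_filter _ h)
    have hcard : ∀ {P : β → Prop} [DecidablePred P] {C : Finset β},
        C ⊆ (V.erase v).filter P → #(insert v C) = #C + 1 := fun hC =>
      card_insert_of_notMem fun h => notMem_erase v V (mem_of_mem_filter _ (hC h))
    by_cases hN : (a + (b + 1)).choose a ≤ #((V.erase v).filter (R v))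
    · rcases exists_pairwise_or_pairwise_not_of_choose_le hR a (b + 1) _ hN with
        ⟨C, hC, hCc, hCR⟩ | ⟨I, hI, hIc, hIR⟩
      · exact Or.inl ⟨insert v C, insert_subset hv (hC.trans hsub), by rw [hcard hC, hCc],
          pairwise_insert_of_subset_filter hR hCR hC⟩
      · exact Or.inr ⟨I, hI.trans hsub, hIc, hIR⟩
    · have hM : (a + 1 + b).choose (a + 1) ≤ #((V.erase v).filter fun u => ¬R v u) := by
        omega
      rcases exists_pairwise_or_pairwise_not_of_choose_le hR (a + 1) b _ hM with
        ⟨C, hC, hCc, hCR⟩ | ⟨I, hI, hIc, hIR⟩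
      · exact Or.inl ⟨C, hC.trans hsub, hCc, hCR⟩
      · exact Or.inr ⟨insert v I, insert_subset hv (hI.trans hsub), by rw [hcard hI, hIc],
          pairwise_insert_of_subset_filter (fun x y h h' => h (hR y x h')) hIR hI⟩
termination_by a b => a + b

end Finset

namespace List
variable {α : Type*}

theorem exists_eq_flatten_replicate_of_append_comm {x y : List α} (h : x ++ y = y ++ x) :
    ∃ z i j, x = (replicate i z).flatten ∧ y = (replicate j z).flatten := by
  induction hxy : x.length + y.length using Nat.strong_induction_on generalizing x y with
  | _ N ih =>
  wlog hle : x.length ≤ y.length generalizing x y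
  · obtain ⟨z, i, j, hy, hx⟩ := this h.symm (by omega) (by omega)
    exact ⟨z, j, i, hx, hy⟩
  rcases eq_or_ne x [] with rfl | hx
  · exact ⟨y, 0, 1, by simp, by simp⟩
  obtain ⟨y', rfl⟩ : x <+: y :=
    prefix_of_prefix_length_le (h ▸ prefix_append x y) (prefix_append y x) hle
  have h' : x ++ y' = y' ++ x := by simpa using h
  obtain ⟨z, i, j, rfl, rfl⟩ := ih _ (by simp [← hxy, length_pos_iff.mpr hx]) h' rfl
  exact ⟨z, i, i + j, rfl, by rw [replicate_add, flatten_append]⟩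

theorem exists_eq_flatten_replicate_of_append_comm_of_ne_nil {g l : List α}
    (h : g ++ l = l ++ g) (hg : g ≠ []) :
    ∃ z i, l = (replicate i z).flatten ∧ z.length ≤ g.length := by
  obtain ⟨z, i, j, rfl, rfl⟩ := exists_eq_flatten_replicate_of_append_comm h
  refine ⟨z, j, rfl, ?_⟩
  have hi : i ≠ 0 := by rintro rfl; simp at hg
  simpa using Nat.le_mul_of_pos_left z.length (Nat.pos_of_ne_zero hi)

theorem card_le_of_forall_length_le [Fintype α] {F : Finset (List α)} {n : ℕ}
    (hF : ∀ w ∈ F, w.length ≤ n) : #F ≤ (Fintype.card α + 1) ^ n := by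
  classical
  have hinj : Set.InjOn (fun (w : List α) (i : Fin n) => w[(i : ℕ)]?) F := by
    intro w hw w' hw' h
    refine ext_getElem? fun k => ?_
    by_cases hk : k < n
    · exact congrFun h ⟨k, hk⟩
    · rw [getElem?_eq_none ((hF w hw).trans (not_lt.1 hk)),
        getElem?_eq_none ((hF w' hw').trans (not_lt.1 hk))]
  simpa using card_le_card_of_injOn _ (fun _ _ => mem_coe.2 (mem_univ _)) hinj

end List

noncomputable def wordsLE (α : Type*) [Finite α] (n : ℕ) : Finset (List α) :=
  (List.finite_length_le α n).toFinset

@[simp] theorem mem_wordsLE {α : Type*} [Finite α] {n : ℕ} {w : List α} :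
    w ∈ wordsLE α n ↔ w.length ≤ n := by
  simp [wordsLE]

theorem card_wordsLE_le (α : Type*) [Fintype α] (n : ℕ) :
    #(wordsLE α n) ≤ (Fintype.card α + 1) ^ n :=
  List.card_le_of_forall_length_le fun _ => mem_wordsLE.1

namespace DFA
variable {α σ : Type*} (M : DFA α σ)

def IsUseful (s : σ) : Prop :=
  (∃ u, M.evalFrom M.start u = s) ∧ ∃ z, M.evalFrom s z ∈ M.accept

def UsefulLoopsCommute : Prop :=
  ∀ s, M.IsUseful s → ∀ g l, M.evalFrom s g = s → M.evalFrom s l = s → g ++ l = l ++ g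

theorem evalFrom_flatten_of_forall {s : σ} {L : List (List α)}
    (h : ∀ x ∈ L, M.evalFrom s x = s) : M.evalFrom s L.flatten = s := by
  induction L with
  | nil => rfl
  | cons x L ih =>
    rw [List.flatten_cons, evalFrom_of_append, h x List.mem_cons_self,
      ih fun y hy => h y (List.mem_cons_of_mem x hy)]

theorem exists_loop_append_forall_ne (s : σ) (c : List α) :
    ∃ l t, c = l ++ t ∧ M.evalFrom s l = s ∧
      ∀ x y, t = x ++ y → x ≠ [] → M.evalFrom s x ≠ s := by
  induction hc : c.length using Nat.strong_induction_on generalizing c with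
  | _ N ih =>
  by_cases hret : ∃ x y, c = x ++ y ∧ x ≠ [] ∧ M.evalFrom s x = s
  · obtain ⟨x, y, rfl, hx, hxs⟩ := hret
    obtain ⟨l, t, rfl, hl, ht⟩ :=
      ih y.length (by simp [← hc, List.length_pos_iff.mpr hx]) y rfl
    exact ⟨x ++ l, t, (List.append_assoc _ _ _).symm, by rw [evalFrom_of_append, hxs, hl], ht⟩
  · push Not at hret
    exact ⟨[], c, rfl, rfl, hret⟩

theorem exists_pumped [Fintype σ] {x : List α} (hx : x ∈ M.accepts)
    (hlen : Fintype.card σ ≤ x.length) :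
    ∃ a b c, b ≠ [] ∧ ∀ i, a ++ (List.replicate i b).flatten ++ c ∈ M.accepts := by
  obtain ⟨a, b, c, -, -, hb, hle⟩ := M.pumping_lemma hx hlen
  refine ⟨a, b, c, hb, fun i => hle ?_⟩
  exact Language.append_mem_mul (Language.append_mem_mul rfl
    (Language.mem_kstar.2 ⟨List.replicate i b, rfl,
      fun y hy => by rw [List.eq_of_mem_replicate hy]; rfl⟩)) rfl

theorem exists_finset_mem_accepts_of_infinite [Finite α] [Fintype σ]
    (h : (M.accepts : Set (List α)).Infinite) :
    ∃ c d : ℕ, ∀ N, ∃ V : Finset (List α), (∀ v ∈ V, v ∈ M.accepts) ∧ #V = N ∧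
      ∀ v ∈ V, v.length ≤ c + N * d := by
  classical
  obtain ⟨x, hx, hxlen⟩ := (h.sdiff (List.finite_length_lt α (Fintype.card σ))).nonempty
  obtain ⟨a, w, c, hw, hpump⟩ := M.exists_pumped hx (not_lt.1 hxlen)
  set word : ℕ → List α := fun i => a ++ (List.replicate i w).flatten ++ c
  have hlen : ∀ i, (word i).length = a.length + c.length + i * w.length := by
    intro i
    simp only [word, List.length_append, List.length_flatten, List.map_replicate,
      List.sum_replicate, smul_eq_mul]
    ring
  refine ⟨a.length + c.length, w.length, fun N => ⟨(range N).image word, ?_, ?_, ?_⟩⟩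
  · intro v hv
    obtain ⟨i, -, rfl⟩ := mem_image.1 hv
    exact hpump i
  · refine (card_image_of_injective _ fun i j hij => ?_).trans (card_range N)
    have := congrArg List.length hij
    rw [hlen, hlen] at this
    exact Nat.eq_of_mul_eq_mul_right (List.length_pos_iff.2 hw) (by omega)
  · intro v hv
    obtain ⟨i, hi, rfl⟩ := mem_image.1 hv
    rw [hlen]
    gcongr
    exact (mem_range.1 hi).le

theorem exists_card_eq_two_pow_of_not_commute {s : σ} {u z g l : List α}
    (hu : M.evalFrom M.start u = s) (hz : M.evalFrom s z ∈ M.accept) (hg : M.evalFrom s g = s)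
    (hl : M.evalFrom s l = s) (hgl : g ++ l ≠ l ++ g) (k : ℕ) :
    ∃ V : Finset (List α), (∀ v ∈ V, v ∈ M.accepts) ∧ #V = 2 ^ k ∧
      ∀ v ∈ V, v.length = u.length + k * (g ++ l).length + z.length := by
  classical
  set block : Bool → List α := fun b => if b then g ++ l else l ++ g
  have hblock : ∀ b, (block b).length = (g ++ l).length := by
    intro b; cases b <;> simp [block, Nat.add_comm]
  have hloop : ∀ b, M.evalFrom s (block b) = s := by
    intro b; cases b <;> simp [block, evalFrom_of_append, hg, hl]
  set word : (Fin k → Bool) → List α := fun f => u ++ (List.ofFn (block ∘ f)).flatten ++ z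
  have hinj : Function.Injective word := by
    intro f f' h
    have hflat : (List.ofFn (block ∘ f)).flatten = (List.ofFn (block ∘ f')).flatten := by
      simpa [word] using h
    have hblocks : List.ofFn (block ∘ f) = List.ofFn (block ∘ f') :=
      List.eq_iff_flatten_eq.2 ⟨hflat, by
        rw [List.map_ofFn, List.map_ofFn]
        exact congrArg List.ofFn (funext fun i => (hblock _).trans (hblock _).symm)⟩
    funext i
    have hi : block (f i) = block (f' i) := congrFun (List.ofFn_injective hblocks) i
    revert hi
    cases f i <;> cases f' i <;> simp [block, hgl, Ne.symm hgl]
  refine ⟨univ.image word, fun v hv => ?_, by rw [card_image_of_injective _ hinj, card_univ,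
    Fintype.card_fun, Fintype.card_bool, Fintype.card_fin], fun v hv => ?_⟩
  · obtain ⟨f, -, rfl⟩ := mem_image.1 hv
    rw [mem_accepts, eval, evalFrom_of_append, evalFrom_of_append, hu,
      evalFrom_flatten_of_forall M fun x hx => ?_]
    · exact hz
    · obtain ⟨i, rfl⟩ := List.mem_ofFn.1 hx
      exact hloop _
  · obtain ⟨f, -, rfl⟩ := mem_image.1 hv
    simp [word, hblock, Function.comp_def]
    omega

end DFA

namespace RandomKpFree
open List (replicate)

section Shaped
variable {α σ : Type*}

/-- `Shaped q k w`: `w = u₁ z₁ ^ t₁ ⋯ uₖ zₖ ^ tₖ r` with every `uᵢ`, `zᵢ` and `r` of length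
at most `q`. -/
inductive Shaped (q : ℕ) : ℕ → List α → Prop
  | base {w : List α} : w.length ≤ q → Shaped q 0 w
  | block {k : ℕ} {u z w : List α} (t : ℕ) : u.length ≤ q → z.length ≤ q → Shaped q k w →
      Shaped q (k + 1) (u ++ (replicate t z).flatten ++ w)

theorem Shaped.succ {q k : ℕ} {w : List α} (h : Shaped q k w) : Shaped q (k + 1) w := by
  simpa using Shaped.block (u := []) (z := []) 0 (Nat.zero_le q) (Nat.zero_le q) h

theorem Shaped.mono {q k k' : ℕ} {w : List α} (h : Shaped q k w) (hk : k ≤ k') :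
    Shaped q k' w := by
  induction k', hk using Nat.le_induction with
  | base => exact h
  | succ k' _ ih => exact ih.succ

theorem Shaped.of_length_le {q : ℕ} {w : List α} (h : w.length ≤ q) (k : ℕ) : Shaped q k w :=
  (Shaped.base h).mono k.zero_le

theorem exists_finset_shaped (α : Type*) [Fintype α] (q n k : ℕ) :
    ∃ F : Finset (List α), (∀ w, Shaped q k w → w.length ≤ n → w ∈ F) ∧
      #F ≤ (Fintype.card α + 1) ^ q * ((Fintype.card α + 1) ^ (2 * q) * (n + 1)) ^ k := by
  classical
  induction k with
  | zero =>
    refine ⟨wordsLE α q, fun w hw _ => ?_, by simpa using card_wordsLE_le α q⟩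
    cases hw with
    | base h => exact mem_wordsLE.2 h
  | succ k ih =>
    obtain ⟨F, hF, hFcard⟩ := ih
    refine ⟨((wordsLE α q ×ˢ wordsLE α q) ×ˢ (range (n + 1) ×ˢ F)).image
      fun x => x.1.1 ++ (replicate x.2.1 x.1.2).flatten ++ x.2.2, fun w hw hwn => ?_, ?_⟩
    · cases hw with
      | block t hu hz hw' =>
        rename_i u z w'
        -- the exponent of an empty block is arbitrary; otherwise it is at most `n`
        have hrep : (replicate (min t n) z).flatten = (replicate t z).flatten := by
          rcases eq_or_ne z [] with rfl | hz0
          · simp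
          · have : t * z.length ≤ n := by simp at hwn; omega
            rw [min_eq_left ((Nat.le_mul_of_pos_right t (List.length_pos_iff.2 hz0)).trans this)]
        refine mem_image.2 ⟨((u, z), (min t n, w')), ?_, by simp only [hrep]⟩
        simp only [mem_product, mem_wordsLE, mem_range]
        exact ⟨⟨hu, hz⟩, by omega, hF w' hw' (by simp at hwn; omega)⟩
    · set B := Fintype.card α + 1
      calc _ ≤ #((wordsLE α q ×ˢ wordsLE α q) ×ˢ (range (n + 1) ×ˢ F)) := card_image_le
        _ ≤ (B ^ q * B ^ q) * ((n + 1) * (B ^ q * (B ^ (2 * q) * (n + 1)) ^ k)) := by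
          simp only [card_product, Finset.card_range]
          gcongr <;> exact card_wordsLE_le α q
        _ = B ^ q * (B ^ (2 * q) * (n + 1)) ^ (k + 1) := by ring

variable (M : DFA α σ) [Fintype σ]

theorem shaped_of_forall_prefix_mem (hM : M.UsefulLoopsCommute) (S : Finset σ)
    (hS : ∀ s ∈ S, M.IsUseful s) (s₀ : σ) (w : List α)
    (hw : ∀ x y, w = x ++ y → x ≠ [] → M.evalFrom s₀ x ∈ S) :
    Shaped (Fintype.card σ) #S w := by
  classical
  induction S using Finset.strongInduction generalizing s₀ w with
  | _ S ih =>
  by_cases hlen : w.length < Fintype.card σ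
  · exact Shaped.of_length_le hlen.le _
  obtain ⟨s, a, b, c, rfl, hab, hb, ha, hbs, -⟩ := M.evalFrom_split (not_lt.1 hlen) rfl
  have hsS : s ∈ S := by
    have := hw (a ++ b) c rfl (by simp [hb])
    rwa [DFA.evalFrom_of_append, ha, hbs] at this
  -- cut the run at its last visit to `s`: the part `l` before it is a loop at `s` commuting
  -- with the short loop `b`, and the rest `t` never returns to `s`
  obtain ⟨l, t, hbc, hl, ht⟩ := M.exists_loop_append_forall_ne s (b ++ c)
  obtain ⟨z, i, rfl, hz⟩ := List.exists_eq_flatten_replicate_of_append_comm_of_ne_nil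
    (hM s (hS s hsS) b l hbs hl) hb
  have htail : Shaped (Fintype.card σ) #(S.erase s) t := by
    refine ih _ (erase_ssubset hsS) (fun s' hs' => hS s' (mem_of_mem_erase hs')) s t
      fun x y hxy hx => mem_erase.2 ⟨ht x y hxy hx, ?_⟩
    have := hw (a ++ (replicate i z).flatten ++ x) y
      (by rw [List.append_assoc a b c, hbc, hxy]; simp) (by simp [hx])
    rwa [DFA.evalFrom_of_append, DFA.evalFrom_of_append, ha, hl] at this
  rw [← card_erase_add_one hsS, List.append_assoc a b c, hbc, ← List.append_assoc]
  exact htail.block i (by omega) (by omega)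

theorem shaped_of_append_mem_accepts (hM : M.UsefulLoopsCommute) {w r : List α}
    (h : w ++ r ∈ M.accepts) : Shaped (Fintype.card σ) (Fintype.card σ) w := by
  classical
  refine (shaped_of_forall_prefix_mem M hM (univ.filter M.IsUseful)
    (fun s hs => (mem_filter.1 hs).2) M.start w
    fun x y hxy _ => mem_filter.2 ⟨mem_univ _, ⟨x, rfl⟩, y ++ r, ?_⟩).mono (card_filter_le _ _)
  rwa [← DFA.evalFrom_of_append, ← List.append_assoc, ← hxy]

end Shaped

variable {Γ σ τ : Type*}

def ExtensionProperty (A : Set (List Γ)) (E : List Γ → List Γ → Prop) (p : ℕ) : Prop :=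
  ∀ Y : Finset (List Γ), ↑Y ⊆ A → ∀ K ⊆ Y,
    (¬ ∃ s ⊆ K, #s = p - 1 ∧ (s : Set (List Γ)).Pairwise E) →
    ∃ x ∈ A, (∀ v ∈ K, E x v) ∧ ∀ v ∈ Y, v ∉ K → ¬ E x v

structure IsRandomKpFree (A : Set (List Γ)) (E : List Γ → List Γ → Prop) (p : ℕ) : Prop where
  symm : ∀ x ∈ A, ∀ y ∈ A, E x y → E y x
  cliqueFree : ¬ ∃ s : Finset (List Γ), ↑s ⊆ A ∧ #s = p ∧ (s : Set (List Γ)).Pairwise E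
  extension : ExtensionProperty A E p

/-- The data of `x` that `M` reads when `x` is convolved with a word of length at most `n`. -/
def profile (M : DFA (Fin 2 → Option Γ) σ) (n : ℕ) (x : List Γ) : List Γ × Set σ :=
  (x.take n, {s | M.evalFrom s ((x.drop n).map fun a => ![some a, none]) ∈ M.accept})

theorem conv_pair_mem_accepts_iff (M : DFA (Fin 2 → Option Γ) σ) (x : List Γ) {v : List Γ}
    {n : ℕ} (hv : v.length ≤ n) :
    conv ![x, v] ∈ M.accepts ↔
      M.evalFrom M.start (conv ![(profile M n x).1, v]) ∈ (profile M n x).2 := by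
  rw [conv_pair_eq_take_append x hv, DFA.mem_accepts, DFA.eval, DFA.evalFrom_of_append]
  rfl

variable {A : Set (List Γ)} {E : List Γ → List Γ → Prop} {p : ℕ}

theorem ExtensionProperty.infinite (hext : ExtensionProperty A E p) (hp : 3 ≤ p) :
    A.Infinite := by
  classical
  intro hfin
  set Y := hfin.toFinset
  -- the empty set and all singletons are realised as neighbourhood traces on `Y` by vertices
  -- of `Y` itself
  have hsub : insert ∅ (Y.image ({·})) ⊆ Y.image fun x => Y.filter (E x ·) := by
    intro K hK
    obtain ⟨hKY, hK⟩ : K ⊆ Y ∧ #K ≤ 1 := by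
      rcases mem_insert.1 hK with rfl | hK
      · simp
      · obtain ⟨v, hv, rfl⟩ := mem_image.1 hK
        simpa using hv
    obtain ⟨x, hxA, hxK, hxY⟩ := hext Y (by simp [Y]) K hKY fun ⟨s, hsK, hs, _⟩ => by
      have := card_le_card hsK
      omega
    refine mem_image.2 ⟨x, hfin.mem_toFinset.2 hxA, ?_⟩
    ext v
    simp only [mem_filter]
    exact ⟨fun ⟨hv, hxv⟩ => by_contra fun h => hxY v hv h hxv, fun hv => ⟨hKY hv, hxK v hv⟩⟩
  have := card_le_card hsub
  rw [card_insert_of_notMem (by simp), card_image_of_injective _ singleton_injective] at this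
  exact (this.trans card_image_le).not_gt (Nat.lt_succ_self _)

variable (M : DFA (Fin 2 → Option Γ) σ)

theorem adj_iff_of_profile_eq (hM : ∀ x ∈ A, ∀ y ∈ A, E x y ↔ conv ![x, y] ∈ M.accepts)
    {n : ℕ} {x x' v : List Γ} (hx : x ∈ A) (hx' : x' ∈ A) (hv : v ∈ A) (hvn : v.length ≤ n)
    (h : profile M n x = profile M n x') : E x v ↔ E x' v := by
  rw [hM x hx v hv, hM x' hx' v hv, conv_pair_mem_accepts_iff M x hvn,
    conv_pair_mem_accepts_iff M x' hvn, h]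

theorem two_pow_card_le_of_pairwise_not [Fintype σ] (hp : 3 ≤ p)
    (hext : ExtensionProperty A E p) (hM : ∀ x ∈ A, ∀ y ∈ A, E x y ↔ conv ![x, y] ∈ M.accepts)
    {I : Finset (List Γ)} (hIA : ↑I ⊆ A) (hI : (I : Set (List Γ)).Pairwise fun x y => ¬E x y)
    {n : ℕ} (hIn : ∀ v ∈ I, v.length ≤ n) {P : Finset (List Γ)} (hP : ∀ u ∈ A, u.take n ∈ P) :
    2 ^ #I ≤ #P * 2 ^ Fintype.card σ := by
  classical
  have hwit : ∀ K ∈ I.powerset, ∃ x ∈ A, (∀ v ∈ K, E x v) ∧ ∀ v ∈ I, v ∉ K → ¬E x v := by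
    intro K hK
    refine hext I hIA K (mem_powerset.1 hK) fun ⟨s, hsK, hs, hsE⟩ => ?_
    obtain ⟨x, hx, y, hy, hxy⟩ := one_lt_card.1 (show 1 < #s by omega)
    have hsI := hsK.trans (mem_powerset.1 hK)
    exact hI (hsI hx) (hsI hy) hxy (hsE hx hy hxy)
  choose! w hwA hwK hwI using hwit
  have hinj : Set.InjOn (fun K => profile M n (w K)) I.powerset := by
    intro K hK K' hK' h
    have hiff : ∀ v ∈ I, E (w K) v ↔ E (w K') v := fun v hv =>
      adj_iff_of_profile_eq M hM (hwA K hK) (hwA K' hK') (hIA hv) (hIn v hv) h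
    ext v
    constructor <;> intro hv
    · have hvI := mem_powerset.1 hK hv
      exact by_contra fun h' => hwI K' hK' v hvI h' ((hiff v hvI).1 (hwK K hK v hv))
    · have hvI := mem_powerset.1 hK' hv
      exact by_contra fun h' => hwI K hK v hvI h' ((hiff v hvI).2 (hwK K' hK' v hv))
  calc 2 ^ #I = #I.powerset := (card_powerset I).symm
    _ ≤ #(P ×ˢ (univ : Finset (Set σ))) :=
      card_le_card_of_injOn _ (fun K hK => mem_product.2 ⟨hP _ (hwA K hK), mem_univ _⟩) hinj
    _ = #P * 2 ^ Fintype.card σ := by rw [card_product, card_univ, Fintype.card_set]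

namespace IsRandomKpFree

variable [Fintype σ]

theorem two_pow_le (hG : IsRandomKpFree A E p) (hp : 3 ≤ p)
    (hM : ∀ x ∈ A, ∀ y ∈ A, E x y ↔ conv ![x, y] ∈ M.accepts) {V : Finset (List Γ)}
    (hVA : ↑V ⊆ A) {n : ℕ} (hVn : ∀ v ∈ V, v.length ≤ n) {P : Finset (List Γ)}
    (hP : ∀ u ∈ A, u.take n ∈ P) {b : ℕ} (hV : (p - 1 + b).choose (p - 1) ≤ #V) :
    2 ^ (b + 1) ≤ #P * 2 ^ Fintype.card σ := by
  classical
  rcases exists_pairwise_or_pairwise_not_of_choose_le (R := fun x y => E x y ∧ E y x)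
    (fun x y h => h.symm) _ _ V hV with ⟨C, hCV, hC, hCE⟩ | ⟨I, hIV, hI, hIE⟩
  · exact absurd ⟨C, (coe_subset.2 hCV).trans hVA, by omega,
      fun x hx y hy hxy => (hCE hx hy hxy).1⟩ hG.cliqueFree
  · have hIA : ↑I ⊆ A := (coe_subset.2 hIV).trans hVA
    rw [← hI]
    exact two_pow_card_le_of_pairwise_not M hp hG.extension hM hIA
      (fun x hx y hy hxy hE => hIE hx hy hxy ⟨hE, hG.symm x (hIA hx) y (hIA hy) hE⟩)
      (fun v hv => hVn v (hIV hv)) hP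

theorem usefulLoopsCommute [Fintype Γ] (hG : IsRandomKpFree A E p) (hp : 3 ≤ p)
    (hM : ∀ x ∈ A, ∀ y ∈ A, E x y ↔ conv ![x, y] ∈ M.accepts) (MA : DFA Γ τ)
    (hMA : MA.accepts = A) : MA.UsefulLoopsCommute := by
  by_contra hcomm
  simp only [DFA.UsefulLoopsCommute, DFA.IsUseful, not_forall] at hcomm
  obtain ⟨s, ⟨⟨u, hu⟩, z, hz⟩, g, l, hg, hl, hgl⟩ := hcomm
  set G := Fintype.card Γ + 1
  set K := p + G * (u.length + z.length + (g ++ l).length) + Fintype.card σ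
  obtain ⟨k, hk, hk1⟩ := ((Nat.eventually_mul_pow_lt_two_pow (K ^ (p - 1)) (p - 1)).and
    (eventually_ge_atTop 1)).exists
  obtain ⟨V, hVA, hV, hVlen⟩ := MA.exists_card_eq_two_pow_of_not_commute hu hz hg hl hgl k
  set n := u.length + k * (g ++ l).length + z.length
  -- with `b = G * n + #σ`, `2 ^ (b + 1)` exceeds the bound `G ^ n * 2 ^ #σ` on profiles, while
  -- `(p - 1 + b).choose (p - 1)` is only polynomial in `k`
  have hchoose : (p - 1 + (G * n + Fintype.card σ)).choose (p - 1) ≤ #V := calc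
    _ ≤ (p - 1 + (G * n + Fintype.card σ)) ^ (p - 1) := Nat.choose_le_pow _ _
    _ ≤ (K * k) ^ (p - 1) := by
      gcongr
      simp only [K, n]
      nlinarith [Nat.sub_le p 1,
        Nat.le_mul_of_pos_right (p + G * (u.length + z.length) + Fintype.card σ) hk1]
    _ ≤ 2 ^ k := by rw [mul_pow]; exact hk.le
    _ = #V := hV.symm
  have key := hG.two_pow_le M hp hM (fun v hv => hMA ▸ hVA v hv) (fun v hv => (hVlen v hv).le)
    (P := wordsLE Γ n) (fun u _ => by simp) hchoose
  have hGn : G ^ n ≤ 2 ^ (G * n) := by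
    rw [pow_mul]
    exact Nat.pow_le_pow_left Nat.lt_two_pow_self.le n
  have := key.trans (Nat.mul_le_mul_right _ ((card_wordsLE_le Γ n).trans hGn))
  rw [← pow_add, Nat.pow_le_pow_iff_right (by norm_num)] at this
  omega

theorem not_usefulLoopsCommute [Fintype Γ] [Fintype τ] (hG : IsRandomKpFree A E p)
    (hp : 3 ≤ p) (hM : ∀ x ∈ A, ∀ y ∈ A, E x y ↔ conv ![x, y] ∈ M.accepts) (MA : DFA Γ τ)
    (hMA : MA.accepts = A) : ¬ MA.UsefulLoopsCommute := by
  intro hcomm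
  obtain ⟨c, d, hfamily⟩ := MA.exists_finset_mem_accepts_of_infinite
    (by rw [hMA]; exact hG.extension.infinite hp)
  set q := Fintype.card τ
  set G := Fintype.card Γ + 1
  set K := c + 1 + d * p ^ (p - 1)
  set C := G ^ q * (G ^ (2 * q) * K) ^ q * 2 ^ Fintype.card σ
  obtain ⟨b, hb⟩ := (Nat.eventually_mul_pow_lt_two_pow C ((p - 1) * q)).exists_forall_of_atTop
  -- `N` words of length `O(b ^ (p - 1))` contain an independent set of size `b + 1`, while their
  -- prefixes are among the `O(b ^ ((p - 1) * q))` shaped words of that length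
  set N := (p - 1 + b).choose (p - 1)
  obtain ⟨V, hVA, hV, hVlen⟩ := hfamily N
  set n := c + N * d
  obtain ⟨P, hP, hPcard⟩ := exists_finset_shaped Γ q n q
  have key := hG.two_pow_le M hp hM (fun v hv => hMA ▸ hVA v hv) hVlen (P := P)
    (fun u hu => hP _ (shaped_of_append_mem_accepts MA hcomm (r := u.drop n)
      (by rw [List.take_append_drop, hMA]; exact hu)) (List.length_take_le _ _)) hV.ge
  have hN : N ≤ p ^ (p - 1) * (b + 1) ^ (p - 1) := calc
    N ≤ (p - 1 + b) ^ (p - 1) := Nat.choose_le_pow _ _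
    _ ≤ (p * (b + 1)) ^ (p - 1) := by
      gcongr
      nlinarith [Nat.sub_le p 1, Nat.le_mul_of_pos_left b (by omega : 0 < p)]
    _ = _ := mul_pow _ _ _
  have hn : n + 1 ≤ K * (b + 1) ^ (p - 1) := by
    have := Nat.one_le_pow (p - 1) (b + 1) (Nat.succ_pos b)
    simp only [n, K]
    nlinarith
  have hbound : #P * 2 ^ Fintype.card σ ≤ C * (b + 1) ^ ((p - 1) * q) := calc
    #P * 2 ^ Fintype.card σ ≤ G ^ q * (G ^ (2 * q) * (n + 1)) ^ q * 2 ^ Fintype.card σ := by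
      gcongr
    _ ≤ G ^ q * (G ^ (2 * q) * (K * (b + 1) ^ (p - 1))) ^ q * 2 ^ Fintype.card σ := by gcongr
    _ = C * (b + 1) ^ ((p - 1) * q) := by
      simp only [C, pow_mul, mul_pow]
      ring
  exact (key.trans hbound).not_gt (hb (b + 1) (by omega))

end IsRandomKpFree

end RandomKpFree

open RandomKpFree in
/-- For `p ≥ 3`, the random `K_p`-free graph has no automatic presentation:
there is no `K_p`-free graph on a regular set of words, with regular (convoluted)
edge relation, satisfying the `K_p`-free extension property. -/
theorem random_kp_free_graph_not_automatic (p : ℕ) (hp : 3 ≤ p) :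
    ¬ ∃ (Γ : Type) (_ : Fintype Γ) (A : Set (List Γ)) (E : List Γ → List Γ → Prop),
        Language.IsRegular (A : Language Γ) ∧
        (∀ x ∈ A, ¬ E x x) ∧
        (∀ x ∈ A, ∀ y ∈ A, E x y → E y x) ∧
        Language.IsRegular {w | ∃ x ∈ A, ∃ y ∈ A, E x y ∧ w = conv ![x, y]} ∧
        -- `(A, E)` is `K_p`-free
        (¬ ∃ s : Finset (List Γ), ↑s ⊆ A ∧ s.card = p ∧
            ∀ x ∈ s, ∀ y ∈ s, x ≠ y → E x y) ∧
        -- extension property for the random `K_p`-free graph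
        (∀ Y : Finset (List Γ), ↑Y ⊆ A →
          ∀ K : Finset (List Γ), K ⊆ Y →
            (¬ ∃ s : Finset (List Γ), s ⊆ K ∧ s.card = p - 1 ∧
                ∀ x ∈ s, ∀ y ∈ s, x ≠ y → E x y) →
            ∃ x ∈ A, (∀ v ∈ K, E x v) ∧ (∀ v ∈ Y, v ∉ K → ¬ E x v)) := by
  rintro ⟨Γ, _, A, E, ⟨τ, _, MA, hMA⟩, -, hsym, ⟨σ, _, M, hM⟩, hKp, hext⟩
  have hG : IsRandomKpFree A E p := ⟨hsym, hKp, hext⟩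
  have hacc : ∀ x ∈ A, ∀ y ∈ A, E x y ↔ conv ![x, y] ∈ M.accepts := by
    intro x hx y hy
    rw [hM]
    refine ⟨fun h => ⟨x, hx, y, hy, h, rfl⟩, ?_⟩
    rintro ⟨x', hx', y', hy', h, hxy⟩
    have := congrFun (conv_injective hxy)
    obtain ⟨rfl, rfl⟩ : x = x' ∧ y = y' := ⟨this 0, this 1⟩
    exact h
  exact hG.not_usefulLoopsCommute M hp hacc MA hMA (hG.usefulLoopsCommute M hp hacc MA hMA)
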